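/- There exists a constant C > 0, depending only on ψ, ν₁ and ν₂, such that for all ε ∈ (0, 1/2) and all T > 10, vol(E⁺_{T,ε}) ≤ (1+ε)² · vol(E_T) + C and vol(E⁻_{T,ε}) ≥ (1+ε)^{-2} · vol(E_T) − C. -/

import Mathlib

open MeasureTheory Set Filter

/-- The set `E_T` from the paper, as a subset of `ℝ^m × ℝ^n`. -/
def ESet (m n : ℕ) (ψ : ℝ → ℝ) (ν₁ : (Fin m → ℝ) → ℝ) (ν₂ : (Fin n → ℝ) → ℝ)
    (T : ℝ) : Set ((Fin m → ℝ) × (Fin n → ℝ)) :=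
  {p | ν₁ p.1 ^ m < ψ (ν₂ p.2 ^ n) ∧ 1 ≤ ν₂ p.2 ^ n ∧ ν₂ p.2 ^ n < T}

/-- The set `E⁻_{T,ε}` from the paper, as a subset of `ℝ^m × ℝ^n`. -/
def Eminus (m n : ℕ) (ψ : ℝ → ℝ) (ν₁ : (Fin m → ℝ) → ℝ) (ν₂ : (Fin n → ℝ) → ℝ)
    (ε T : ℝ) : Set ((Fin m → ℝ) × (Fin n → ℝ)) :=
  {p | ν₁ p.1 ^ m < (1 + ε)⁻¹ * ψ ((1 + ε) * ν₂ p.2 ^ n)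
    ∧ 3/2 ≤ ν₂ p.2 ^ n ∧ ν₂ p.2 ^ n < (1 + ε)⁻¹ * T}

/-- The set `E'_{T,ε}` from the paper. -/
def Eprime (m n : ℕ) (ψ : ℝ → ℝ) (ν₁ : (Fin m → ℝ) → ℝ) (ν₂ : (Fin n → ℝ) → ℝ)
    (ε T : ℝ) : Set ((Fin m → ℝ) × (Fin n → ℝ)) :=
  {p | ν₁ p.1 ^ m < (1 + ε) * ψ ((1 + ε)⁻¹ * ν₂ p.2 ^ n)
    ∧ 3/2 ≤ ν₂ p.2 ^ n ∧ ν₂ p.2 ^ n < (1 + ε) * T}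

/-- The set `C₀` from the paper. -/
def Czero (m n : ℕ) (ψ : ℝ → ℝ) (ν₁ : (Fin m → ℝ) → ℝ) (ν₂ : (Fin n → ℝ) → ℝ) :
    Set ((Fin m → ℝ) × (Fin n → ℝ)) :=
  {p | ν₁ p.1 ^ m < 2 * ψ 1 ∧ 1/2 < ν₂ p.2 ^ n ∧ ν₂ p.2 ^ n ≤ 3/2}

/-- The set `E⁺_{T,ε} = E'_{T,ε} ∪ C₀` from the paper. -/
def Eplus (m n : ℕ) (ψ : ℝ → ℝ) (ν₁ : (Fin m → ℝ) → ℝ) (ν₂ : (Fin n → ℝ) → ℝ)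
    (ε T : ℝ) : Set ((Fin m → ℝ) × (Fin n → ℝ)) :=
  Eprime m n ψ ν₁ ν₂ ε T ∪ Czero m n ψ ν₁ ν₂

/-!
The linear map `(x, y) ↦ ((1+ε)^(-1/m) x, (1+ε)^(-1/n) y)` multiplies both `ν₁(x)^m` and
`ν₂(y)^n` by `(1+ε)⁻¹` and has determinant `(1+ε)⁻²`. It maps `E'_{T,ε}` into `E_T`, and the part
of `E_T` where `ν₂(y)^n ≥ 3(1+ε)/2` into `E⁻_{T,ε}`. Everything else, namely `C₀` and the rest of
`E_T`, lies in the fixed box `ν₁(x)^m < 2ψ(1)`, `ν₂(y)^n < 9/4`, which is bounded because a norm on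
a finite-dimensional space dominates a multiple of the sup norm; its volume serves as `C`.
-/

-- Instance search does not see through the product `MeasureSpace` instance.
instance (m n : ℕ) : (volume : Measure ((Fin m → ℝ) × (Fin n → ℝ))).IsAddHaarMeasure :=
  Measure.prod.instIsAddHaarMeasure _ _

theorem MeasureTheory.Measure.abs_det_mul_measureReal_le_of_image_subset {E : Type*}
    [NormedAddCommGroup E] [NormedSpace ℝ E] [MeasurableSpace E] [BorelSpace E]
    [FiniteDimensional ℝ E] (μ : Measure E) [μ.IsAddHaarMeasure] (f : E →ₗ[ℝ] E) {s t : Set E}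
    (hst : f '' s ⊆ t) (ht : μ t ≠ ⊤) : |LinearMap.det f| * μ.real s ≤ μ.real t := by
  have := measureReal_mono hst ht
  rwa [measureReal_def, Measure.addHaar_image_linearMap, ENNReal.toReal_mul,
    ENNReal.toReal_ofReal (abs_nonneg _)] at this

namespace Seminorm

variable {E : Type*} [NormedAddCommGroup E] [NormedSpace ℝ E] (p : Seminorm ℝ E)

theorem rpow_inv_smul_pow {k : ℕ} (hk : k ≠ 0) {t : ℝ} (ht : 0 ≤ t) (x : E) :
    p (t ^ (k : ℝ)⁻¹ • x) ^ k = t * p x ^ k := by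
  rw [map_smul_eq_mul, mul_pow, Real.norm_of_nonneg (Real.rpow_nonneg ht _),
    Real.rpow_inv_natCast_pow ht hk]

variable [FiniteDimensional ℝ E]

theorem continuous_of_finiteDimensional : Continuous p :=
  continuousOn_univ.1 (p.convexOn.continuousOn isOpen_univ)

theorem exists_pos_mul_norm_le (hp : ∀ x, p x = 0 → x = 0) : ∃ c > 0, ∀ x, c * ‖x‖ ≤ p x := by
  obtain ⟨c, hc, hcp⟩ := (isCompact_sphere (0 : E) 1).exists_forall_le'
    p.continuous_of_finiteDimensional.continuousOn (a := 0) fun x hx =>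
      (apply_nonneg p x).lt_of_ne' fun h => by simp [hp x h] at hx
  refine ⟨c, hc, fun x => ?_⟩
  rcases eq_or_ne x 0 with rfl | hx
  · simp
  · have := hcp (‖x‖⁻¹ • x) (by simp [norm_smul, hx])
    rwa [map_smul_eq_mul, norm_inv, norm_norm, le_inv_mul_iff₀ (norm_pos_iff.2 hx),
      mul_comm] at this

theorem isBounded_setOf_pow_lt (hp : ∀ x, p x = 0 → x = 0) {k : ℕ} (hk : k ≠ 0) (r : ℝ) :
    Bornology.IsBounded {x | p x ^ k < r} := by
  obtain ⟨c, hc, hcp⟩ := p.exists_pos_mul_norm_le hp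
  refine isBounded_iff_forall_norm_le.2 ⟨max 1 r / c, fun x hx => ?_⟩
  have hpx : p x ≤ max 1 r := by
    by_contra! h
    have h₁ : 1 ≤ p x := (le_max_left 1 r).trans h.le
    have : p x < r := (le_self_pow₀ h₁ hk).trans_lt hx
    exact (h.trans this).not_ge (le_max_right 1 r)
  rw [le_div_iff₀ hc, mul_comm]
  exact (hcp x).trans hpx

end Seminorm

section Sets

variable {m n : ℕ} {ψ : ℝ → ℝ} {ν₁ : Seminorm ℝ (Fin m → ℝ)} {ν₂ : Seminorm ℝ (Fin n → ℝ)}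
  {ε T : ℝ}

def normBox (m n : ℕ) (ν₁ : Seminorm ℝ (Fin m → ℝ)) (ν₂ : Seminorm ℝ (Fin n → ℝ)) (r s : ℝ) :
    Set ((Fin m → ℝ) × (Fin n → ℝ)) :=
  {x | ν₁ x ^ m < r} ×ˢ {y | ν₂ y ^ n < s}

theorem mem_normBox {r s : ℝ} {p : (Fin m → ℝ) × (Fin n → ℝ)} :
    p ∈ normBox m n ν₁ ν₂ r s ↔ ν₁ p.1 ^ m < r ∧ ν₂ p.2 ^ n < s :=
  Iff.rfl

theorem volume_normBox_lt_top (hν₁ : ∀ x, ν₁ x = 0 → x = 0) (hν₂ : ∀ y, ν₂ y = 0 → y = 0)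
    (hm : m ≠ 0) (hn : n ≠ 0) (r s : ℝ) : volume (normBox m n ν₁ ν₂ r s) < ⊤ :=
  ((ν₁.isBounded_setOf_pow_lt hν₁ hm r).prod (ν₂.isBounded_setOf_pow_lt hν₂ hn s)).measure_lt_top

noncomputable def anisoScale (m n : ℕ) (t : ℝ) :
    ((Fin m → ℝ) × (Fin n → ℝ)) →ₗ[ℝ] (Fin m → ℝ) × (Fin n → ℝ) :=
  ((t ^ (m : ℝ)⁻¹) • LinearMap.id).prodMap ((t ^ (n : ℝ)⁻¹) • LinearMap.id)

theorem anisoScale_apply (t : ℝ) (p : (Fin m → ℝ) × (Fin n → ℝ)) :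
    anisoScale m n t p = (t ^ (m : ℝ)⁻¹ • p.1, t ^ (n : ℝ)⁻¹ • p.2) :=
  rfl

theorem det_anisoScale (hm : m ≠ 0) (hn : n ≠ 0) {t : ℝ} (ht : 0 ≤ t) :
    LinearMap.det (anisoScale m n t) = t ^ 2 := by
  rw [anisoScale, LinearMap.det_prodMap, LinearMap.det_smul, LinearMap.det_smul,
    LinearMap.det_id, LinearMap.det_id, Module.finrank_fin_fun, Module.finrank_fin_fun,
    Real.rpow_inv_natCast_pow ht hm, Real.rpow_inv_natCast_pow ht hn]
  ring


theorem ESet_subset_normBox (hψ : AntitoneOn ψ (Ici 1)) :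
    ESet m n ψ ν₁ ν₂ T ⊆ normBox m n ν₁ ν₂ (ψ 1) T :=
  fun _ ⟨hx, hy, hT⟩ => ⟨hx.trans_le (hψ self_mem_Ici hy hy), hT⟩

theorem Czero_subset_normBox : Czero m n ψ ν₁ ν₂ ⊆ normBox m n ν₁ ν₂ (2 * ψ 1) (9 / 4) :=
  fun _ ⟨hx, _, hy⟩ => mem_normBox.2 ⟨hx, by linarith⟩

theorem ESet_subset_union_normBox (hψpos : 0 < ψ 1) (hψ : AntitoneOn ψ (Ici 1))
    (hε : ε < 1 / 2) :
    ESet m n ψ ν₁ ν₂ T ⊆ {p ∈ ESet m n ψ ν₁ ν₂ T | 3 / 2 * (1 + ε) ≤ ν₂ p.2 ^ n} ∪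
      normBox m n ν₁ ν₂ (2 * ψ 1) (9 / 4) := by
  intro p hp
  rcases le_or_gt (3 / 2 * (1 + ε)) (ν₂ p.2 ^ n) with hlarge | hsmall
  · exact Or.inl ⟨hp, hlarge⟩
  · obtain ⟨hx, hy, -⟩ := hp
    have := hψ self_mem_Ici hy hy
    exact Or.inr (mem_normBox.2 ⟨by linarith, by linarith⟩)

theorem Eminus_subset_ESet (hψpos : ∀ t, 1 ≤ t → 0 < ψ t) (hψ : AntitoneOn ψ (Ici 1))
    (hε : 0 < ε) (hT : 0 ≤ T) : Eminus m n ψ ν₁ ν₂ ε T ⊆ ESet m n ψ ν₁ ν₂ T := by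
  rintro p ⟨hx, hy, hyT⟩
  have hy₁ : 1 ≤ ν₂ p.2 ^ n := by linarith
  have hle : ∀ s, 0 ≤ s → s ≤ (1 + ε) * s := fun s hs => le_mul_of_one_le_left hs (by linarith)
  have hy' := hle _ (zero_le_one.trans hy₁)
  have hψ' := hψpos _ (hy₁.trans hy')
  refine ⟨?_, hy₁, hyT.trans_le (inv_mul_le_of_le_mul₀ (by linarith) hT (hle T hT))⟩
  calc ν₁ p.1 ^ m < (1 + ε)⁻¹ * ψ ((1 + ε) * ν₂ p.2 ^ n) := hx
    _ ≤ ψ ((1 + ε) * ν₂ p.2 ^ n) :=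
      inv_mul_le_of_le_mul₀ (by linarith) hψ'.le (hle _ hψ'.le)
    _ ≤ ψ (ν₂ p.2 ^ n) := hψ hy₁ (hy₁.trans hy') hy'

variable (hm : m ≠ 0) (hn : n ≠ 0)
include hm hn

theorem anisoScale_image_Eprime_subset_ESet (hε : 0 < ε) (hε' : ε < 1 / 2) :
    anisoScale m n (1 + ε)⁻¹ '' Eprime m n ψ ν₁ ν₂ ε T ⊆ ESet m n ψ ν₁ ν₂ T := by
  rintro _ ⟨p, ⟨hx, hy, hT⟩, rfl⟩
  have hε₁ : 0 < 1 + ε := by linarith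
  simp only [ESet, mem_ofPred_eq, anisoScale_apply, ν₁.rpow_inv_smul_pow hm (inv_nonneg.2 hε₁.le),
    ν₂.rpow_inv_smul_pow hn (inv_nonneg.2 hε₁.le)]
  exact ⟨(inv_mul_lt_iff₀ hε₁).2 hx, (le_inv_mul_iff₀ hε₁).2 (by linarith),
    (inv_mul_lt_iff₀ hε₁).2 hT⟩

theorem anisoScale_image_subset_Eminus (hε : 0 < ε) :
    anisoScale m n (1 + ε)⁻¹ '' {p ∈ ESet m n ψ ν₁ ν₂ T | 3 / 2 * (1 + ε) ≤ ν₂ p.2 ^ n} ⊆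
      Eminus m n ψ ν₁ ν₂ ε T := by
  rintro _ ⟨p, ⟨⟨hx, -, hT⟩, hy⟩, rfl⟩
  have hε₁ : 0 < 1 + ε := by linarith
  simp only [Eminus, mem_ofPred_eq, anisoScale_apply, ν₁.rpow_inv_smul_pow hm (inv_nonneg.2 hε₁.le),
    ν₂.rpow_inv_smul_pow hn (inv_nonneg.2 hε₁.le), mul_inv_cancel_left₀ hε₁.ne']
  exact ⟨(mul_lt_mul_iff_right₀ (inv_pos.2 hε₁)).2 hx, (le_inv_mul_iff₀ hε₁).2 (by linarith),
    (mul_lt_mul_iff_right₀ (inv_pos.2 hε₁)).2 hT⟩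

theorem abs_det_anisoScale_inv (hε : 0 < ε) :
    |LinearMap.det (anisoScale m n (1 + ε)⁻¹)| = ((1 + ε) ^ 2)⁻¹ := by
  rw [det_anisoScale hm hn (by positivity), inv_pow, abs_of_pos (by positivity)]

theorem measureReal_Eprime_le (hε : 0 < ε) (hε' : ε < 1 / 2)
    (hE : volume (ESet m n ψ ν₁ ν₂ T) ≠ ⊤) :
    volume.real (Eprime m n ψ ν₁ ν₂ ε T) ≤ (1 + ε) ^ 2 * volume.real (ESet m n ψ ν₁ ν₂ T) := by
  have := volume.abs_det_mul_measureReal_le_of_image_subset _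
    (anisoScale_image_Eprime_subset_ESet hm hn hε hε') hE
  rwa [abs_det_anisoScale_inv hm hn hε, inv_mul_le_iff₀ (by positivity)] at this

theorem inv_mul_measureReal_ESet_le (hψpos : ∀ t, 1 ≤ t → 0 < ψ t)
    (hψ : AntitoneOn ψ (Ici 1)) (hε : 0 < ε) (hε' : ε < 1 / 2) (hT : 0 ≤ T)
    (hE : volume (ESet m n ψ ν₁ ν₂ T) ≠ ⊤)
    (hD : volume (normBox m n ν₁ ν₂ (2 * ψ 1) (9 / 4)) ≠ ⊤) :
    ((1 + ε) ^ 2)⁻¹ * volume.real (ESet m n ψ ν₁ ν₂ T) ≤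
      volume.real (Eminus m n ψ ν₁ ν₂ ε T) + volume.real (normBox m n ν₁ ν₂ (2 * ψ 1) (9 / 4)) := by
  set A := {p ∈ ESet m n ψ ν₁ ν₂ T | 3 / 2 * (1 + ε) ≤ ν₂ p.2 ^ n}
  set D := normBox m n ν₁ ν₂ (2 * ψ 1) (9 / 4)
  have hA : ((1 + ε) ^ 2)⁻¹ * volume.real A ≤ volume.real (Eminus m n ψ ν₁ ν₂ ε T) := by
    rw [← abs_det_anisoScale_inv hm hn hε]
    exact volume.abs_det_mul_measureReal_le_of_image_subset _
      (anisoScale_image_subset_Eminus hm hn hε)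
      (measure_ne_top_of_subset (Eminus_subset_ESet hψpos hψ hε hT) hE)
  have hsplit : volume.real (ESet m n ψ ν₁ ν₂ T) ≤ volume.real A + volume.real D :=
    (measureReal_mono (ESet_subset_union_normBox (hψpos 1 le_rfl) hψ hε')
      (measure_union_ne_top (measure_ne_top_of_subset (sep_subset _ _) hE) hD)).trans
      (measureReal_union_le _ _)
  have hDscaled : ((1 + ε) ^ 2)⁻¹ * volume.real D ≤ volume.real D :=
    mul_le_of_le_one_left measureReal_nonneg (inv_le_one_of_one_le₀ (by nlinarith))
  linarith [mul_le_mul_of_nonneg_left hsplit (by positivity : 0 ≤ ((1 + ε) ^ 2)⁻¹)]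

end Sets

theorem volume_Eplus_Eminus_vs_ET_general (m n : ℕ) (hm : 1 ≤ m) (hn : 1 ≤ n)
    (ψ : ℝ → ℝ)
    (hψpos : ∀ t : ℝ, 1 ≤ t → 0 < ψ t)
    (hψanti : AntitoneOn ψ (Set.Ici 1))
    (ν₁ : (Fin m → ℝ) → ℝ)
    (hν₁add : ∀ x y, ν₁ (x + y) ≤ ν₁ x + ν₁ y)
    (hν₁smul : ∀ (c : ℝ) x, ν₁ (c • x) = |c| * ν₁ x)
    (hν₁def : ∀ x, ν₁ x = 0 ↔ x = 0)
    (ν₂ : (Fin n → ℝ) → ℝ)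
    (hν₂add : ∀ x y, ν₂ (x + y) ≤ ν₂ x + ν₂ y)
    (hν₂smul : ∀ (c : ℝ) x, ν₂ (c • x) = |c| * ν₂ x)
    (hν₂def : ∀ x, ν₂ x = 0 ↔ x = 0) :
    ∃ C : ℝ, 0 < C ∧ ∀ ε : ℝ, 0 < ε → ε < 1/2 → ∀ T : ℝ, 10 < T →
      (volume (Eplus m n ψ ν₁ ν₂ ε T)).toReal
        ≤ (1 + ε) ^ 2 * (volume (ESet m n ψ ν₁ ν₂ T)).toReal + C
      ∧
      ((1 + ε) ^ 2)⁻¹ * (volume (ESet m n ψ ν₁ ν₂ T)).toReal - C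
        ≤ (volume (Eminus m n ψ ν₁ ν₂ ε T)).toReal := by
  obtain ⟨ν₁, rfl⟩ : ∃ p : Seminorm ℝ (Fin m → ℝ), ⇑p = ν₁ := ⟨.of ν₁ hν₁add hν₁smul, rfl⟩
  obtain ⟨ν₂, rfl⟩ : ∃ p : Seminorm ℝ (Fin n → ℝ), ⇑p = ν₂ := ⟨.of ν₂ hν₂add hν₂smul, rfl⟩
  have hm₀ : m ≠ 0 := by omega
  have hn₀ : n ≠ 0 := by omega
  have hbox (r s : ℝ) : volume (normBox m n ν₁ ν₂ r s) ≠ ⊤ :=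
    (volume_normBox_lt_top (fun x => (hν₁def x).1) (fun y => (hν₂def y).1) hm₀ hn₀ r s).ne
  refine ⟨volume.real (normBox m n ν₁ ν₂ (2 * ψ 1) (9 / 4)) + 1, by positivity,
    fun ε hε hε' T hT => ?_⟩
  simp only [← measureReal_def]
  have hE : volume (ESet m n ψ ν₁ ν₂ T) ≠ ⊤ :=
    measure_ne_top_of_subset (ESet_subset_normBox hψanti) (hbox _ _)
  constructor
  · calc volume.real (Eplus m n ψ ν₁ ν₂ ε T)
        ≤ volume.real (Eprime m n ψ ν₁ ν₂ ε T) + volume.real (Czero m n ψ ν₁ ν₂) :=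
          measureReal_union_le _ _
      _ ≤ (1 + ε) ^ 2 * volume.real (ESet m n ψ ν₁ ν₂ T) +
            volume.real (normBox m n ν₁ ν₂ (2 * ψ 1) (9 / 4)) :=
          add_le_add (measureReal_Eprime_le hm₀ hn₀ hε hε' hE)
            (measureReal_mono Czero_subset_normBox (hbox _ _))
      _ ≤ _ := by linarith
  · linarith [inv_mul_measureReal_ESet_le hm₀ hn₀ hψpos hψanti hε hε' (by linarith) hE (hbox _ _)]

theorem volume_Eplus_Eminus_vs_ET (m n : ℕ) (hm : 1 ≤ m) (hn : 1 ≤ n)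
    (ψ : ℝ → ℝ)
    (hψpos : ∀ t : ℝ, 1 ≤ t → 0 < ψ t)
    (hψcont : ContinuousOn ψ (Set.Ici 1))
    (hψanti : AntitoneOn ψ (Set.Ici 1))
    (ν₁ : (Fin m → ℝ) → ℝ)
    (hν₁add : ∀ x y, ν₁ (x + y) ≤ ν₁ x + ν₁ y)
    (hν₁smul : ∀ (c : ℝ) x, ν₁ (c • x) = |c| * ν₁ x)
    (hν₁def : ∀ x, ν₁ x = 0 ↔ x = 0)
    (ν₂ : (Fin n → ℝ) → ℝ)
    (hν₂add : ∀ x y, ν₂ (x + y) ≤ ν₂ x + ν₂ y)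
    (hν₂smul : ∀ (c : ℝ) x, ν₂ (c • x) = |c| * ν₂ x)
    (hν₂def : ∀ x, ν₂ x = 0 ↔ x = 0) :
    ∃ C : ℝ, 0 < C ∧ ∀ ε : ℝ, 0 < ε → ε < 1/2 → ∀ T : ℝ, 10 < T →
      (volume (Eplus m n ψ ν₁ ν₂ ε T)).toReal
        ≤ (1 + ε) ^ 2 * (volume (ESet m n ψ ν₁ ν₂ T)).toReal + C
      ∧
      ((1 + ε) ^ 2)⁻¹ * (volume (ESet m n ψ ν₁ ν₂ T)).toReal - C
        ≤ (volume (Eminus m n ψ ν₁ ν₂ ε T)).toReal :=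
  volume_Eplus_Eminus_vs_ET_general m n hm hn ψ hψpos hψanti ν₁ hν₁add hν₁smul hν₁def ν₂ hν₂add
    hν₂smul hν₂def
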